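/- arXiv:2207.04599 — 8 statements merged into one kernel-verified Lean document; each statement's English description precedes it below -/
import Mathlib

section
/- For all real x with 0 < x ≤ 7.11, we have x ≥ 10/11 + (9/11)·ln(x) + x²/11. -/
/-!
Put `gap t = 11 t - 10 - 9 ln t - t²`, so the claim is `0 ≤ gap x`. Since
`gap' t = -(2t - 9)(t - 1) / t`, the function decreases on `(0, 1]`, increases on `[1, 9/2]` and
decreases on `[9/2, ∞)`. Hence on `(0, 7.11]` its minimum is `min (gap 1) (gap 7.11)`, where
`gap 1 = 0` and `gap 7.11 ≥ 0` follows from `ln 7.11 ≤ 1.9619`, i.e. `7.11 ≤ e · e^0.9619`.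
-/

open Real Set

noncomputable def gap (t : ℝ) : ℝ := 11 * t - 10 - 9 * log t - t ^ 2

lemma hasDerivAt_gap {t : ℝ} (ht : 0 < t) :
    HasDerivAt gap (-((2 * t - 9) * (t - 1)) / t) t := by
  refine ((((hasDerivAt_id' t).const_mul 11).sub_const 10).sub
    ((hasDerivAt_log ht.ne').const_mul 9)).sub (hasDerivAt_pow 2 t) |>.congr_deriv ?_
  field_simp
  ring

lemma continuousOn_gap {D : Set ℝ} (hD : D ⊆ Ioi 0) : ContinuousOn gap D :=
  fun _ ht => (hasDerivAt_gap (hD ht)).continuousAt.continuousWithinAt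

lemma hasDerivWithinAt_gap_interior {D : Set ℝ} (hD : D ⊆ Ioi 0) {t : ℝ} (ht : t ∈ interior D) :
    HasDerivWithinAt gap (-((2 * t - 9) * (t - 1)) / t) (interior D) t :=
  (hasDerivAt_gap (hD (interior_subset ht))).hasDerivWithinAt

lemma gap_monotoneOn {D : Set ℝ} (hconv : Convex ℝ D) (hD : D ⊆ Ioi 0)
    (hsign : ∀ t ∈ interior D, (2 * t - 9) * (t - 1) ≤ 0) : MonotoneOn gap D :=
  monotoneOn_of_hasDerivWithinAt_nonneg hconv (continuousOn_gap hD)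
    (fun _ ht => hasDerivWithinAt_gap_interior hD ht)
    (fun t ht => div_nonneg (neg_nonneg.2 (hsign t ht)) (hD (interior_subset ht)).le)

lemma gap_antitoneOn {D : Set ℝ} (hconv : Convex ℝ D) (hD : D ⊆ Ioi 0)
    (hsign : ∀ t ∈ interior D, 0 ≤ (2 * t - 9) * (t - 1)) : AntitoneOn gap D :=
  antitoneOn_of_hasDerivWithinAt_nonpos hconv (continuousOn_gap hD)
    (fun _ ht => hasDerivWithinAt_gap_interior hD ht)
    (fun t ht => div_nonpos_of_nonpos_of_nonneg (neg_nonpos.2 (hsign t ht))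
      (hD (interior_subset ht)).le)

lemma gap_one : gap 1 = 0 := by
  norm_num [gap]

lemma log_seven_point_one_one_le : log 7.11 ≤ 1.9619 := by
  rw [log_le_iff_le_exp (by norm_num)]
  have he : (2.7182818283 : ℝ) < exp 1 := exp_one_gt_d9
  have htaylor : (2.6164 : ℝ) ≤ exp 0.9619 :=
    le_trans (by norm_num [Finset.sum_range_succ, Nat.factorial])
      (sum_le_exp_of_nonneg (by norm_num : (0 : ℝ) ≤ 0.9619) 7)
  have hsplit : exp 1.9619 = exp 1 * exp 0.9619 := by
    rw [← exp_add]; norm_num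
  nlinarith [exp_pos (0.9619 : ℝ)]

lemma gap_seven_point_one_one_nonneg : 0 ≤ gap 7.11 := by
  have := log_seven_point_one_one_le
  norm_num [gap]
  linarith

lemma gap_nonneg {x : ℝ} (hx : 0 < x) (hx' : x ≤ 7.11) : 0 ≤ gap x := by
  rcases le_or_gt x 1 with h1 | h1
  · have hanti : AntitoneOn gap (Icc x 1) :=
      gap_antitoneOn (convex_Icc _ _) (fun t ht => hx.trans_le ht.1) fun t ht => by
        rw [interior_Icc] at ht; nlinarith [ht.1, ht.2]
    simpa [gap_one] using hanti (left_mem_Icc.2 h1) (right_mem_Icc.2 h1) h1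
  rcases le_or_gt x (9 / 2) with h2 | h2
  · have hmono : MonotoneOn gap (Icc 1 x) :=
      gap_monotoneOn (convex_Icc _ _) (fun t ht => one_pos.trans_le ht.1) fun t ht => by
        rw [interior_Icc] at ht; nlinarith [ht.1, ht.2]
    simpa [gap_one] using hmono (left_mem_Icc.2 h1.le) (right_mem_Icc.2 h1.le) h1.le
  · have hanti : AntitoneOn gap (Icc x 7.11) :=
      gap_antitoneOn (convex_Icc _ _) (fun t ht => hx.trans_le ht.1) fun t ht => by
        rw [interior_Icc] at ht; nlinarith [ht.1, ht.2]
    exact gap_seven_point_one_one_nonneg.trans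
      (hanti (left_mem_Icc.2 hx') (right_mem_Icc.2 hx') hx')

theorem stmt_0 (x : ℝ) (hx : 0 < x) (hx' : x ≤ 7.11) :
    x ≥ 10 / 11 + (9 / 11) * Real.log x + x ^ 2 / 11 := by
  have h := gap_nonneg hx hx'
  unfold gap at h
  linarith
end

section
/- For all real x ≥ 13, we have (x−1)·√(1 − (2·ln(x)+4)/x) − x + ln(x) + 4 ≥ 0. -/
theorem stmt_2 (x : ℝ) (hx : 13 ≤ x) :
    (x - 1) * Real.sqrt (1 - (2 * Real.log x + 4) / x) - x + Real.log x + 4 ≥ 0 := by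
  have hx0 : (0:ℝ) < x := by linarith
  set L := Real.log x with hLdef
  have hLnn : 0 ≤ L := Real.log_nonneg (by linarith)
  -- log 13 < 13/5
  have hlog13 : Real.log 13 < 13/5 := by
    rw [Real.log_lt_iff_lt_exp (by norm_num)]
    have he : (2.7182818283:ℝ) < Real.exp 1 := Real.exp_one_gt_d9
    have h5 : Real.exp (13/5) ^ (5:ℕ) = Real.exp 13 := by
      rw [← Real.exp_nat_mul]; norm_num
    have h13 : Real.exp 13 = Real.exp 1 ^ (13:ℕ) := by
      rw [← Real.exp_nat_mul]; norm_num
    have hb : (13:ℝ)^(5:ℕ) < Real.exp (13/5) ^ (5:ℕ) := by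
      rw [h5, h13]
      calc (13:ℝ)^(5:ℕ) < (2.7182818283:ℝ)^(13:ℕ) := by norm_num
        _ < Real.exp 1 ^ (13:ℕ) := by
            apply pow_lt_pow_left₀ he (by norm_num)
            norm_num
    exact lt_of_pow_lt_pow_left₀ 5 (Real.exp_nonneg _) hb
  -- tangent line bound
  have htan : L ≤ 13/5 + (x - 13)/13 := by
    have hq : Real.log (x/13) ≤ x/13 - 1 := Real.log_le_sub_one_of_pos (by positivity)
    rw [Real.log_div (by linarith) (by norm_num)] at hq
    have : L - Real.log 13 ≤ x/13 - 1 := hq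
    linarith
  -- key polynomial inequality
  have key : 2*x^2 - (L^2 + 4*L + 7)*x - 2*L - 4 ≥ 0 := by
    rcases le_total x 230 with hsm | hlg
    · nlinarith [htan, hLnn, sq_nonneg (L - 13/5 - (x-13)/13), mul_nonneg (sub_nonneg.2 htan) (le_of_lt hx0), sq_nonneg (x - 13), mul_nonneg (mul_nonneg (sub_nonneg.2 htan) (le_of_lt hx0)) (le_of_lt hx0)]
    · set s := Real.sqrt (Real.sqrt x) with hsdef
      have hsx : Real.sqrt x ^ 2 = x := Real.sq_sqrt (le_of_lt hx0)
      have hs2 : s ^ 2 = Real.sqrt x := Real.sq_sqrt (Real.sqrt_nonneg x)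
      have hs4 : s ^ 4 = x := by
        have : s ^ 4 = (s^2)^2 := by ring
        rw [this, hs2, hsx]
      have hsnn : 0 ≤ s := Real.sqrt_nonneg _
      have h9 : (9:ℝ) ≤ Real.sqrt x := by
        rw [show (9:ℝ) = 3^2 by norm_num]
        exact (Real.le_sqrt (by norm_num) (le_of_lt hx0)).2 (by nlinarith)
      have hs3 : 3 ≤ s := by
        rw [hsdef]
        have := (Real.le_sqrt (by norm_num : (0:ℝ) ≤ 3) (Real.sqrt_nonneg x)).2 (by nlinarith [h9])
        exact this
      have hLs : L ≤ 4*s - 4 := by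
        have h1 : Real.log s ≤ s - 1 := Real.log_le_sub_one_of_pos (by linarith)
        have h2 : Real.log s = L / 4 := by
          rw [hsdef, Real.log_sqrt (Real.sqrt_nonneg x), Real.log_sqrt (le_of_lt hx0)]
          ring
        rw [h2] at h1; linarith
      have ht : 0 ≤ s - 3 := by linarith
      have hpoly : 2*(s^4)^2 - (16*s^2 - 16*s + 7)*s^4 - 8*s + 4 ≥ 0 := by
        nlinarith [pow_nonneg ht 2, pow_nonneg ht 3, pow_nonneg ht 4, pow_nonneg ht 5,
          pow_nonneg ht 6, pow_nonneg ht 7, pow_nonneg ht 8, ht]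
      have hL2 : L^2 ≤ (4*s - 4)^2 := by nlinarith [hLs, hLnn]
      have hx4nn : (0:ℝ) ≤ s^4 := pow_nonneg hsnn 4
      have e1 : L^2 * x ≤ (4*s-4)^2 * s^4 := by
        rw [hs4]; exact mul_le_mul_of_nonneg_right hL2 (hs4 ▸ hx4nn)
      have e2 : L * x ≤ (4*s-4) * s^4 := by
        rw [hs4]
        exact mul_le_mul_of_nonneg_right hLs (hs4 ▸ hx4nn)
      have hx2 : x^2 = (s^4)^2 := by rw [hs4]
      linarith [e1, e2, hpoly, hLs, hx2, hs4]
  have hx24 : 0 ≤ x - 2*L - 4 := by nlinarith [htan]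
  have hR : 0 ≤ x - L - 4 := by nlinarith [htan]
  have hx1 : (0:ℝ) < x - 1 := by linarith
  have h1 : 1 - (2*L + 4)/x = (x - 2*L - 4)/x := by field_simp; ring
  have hsq : (x - L - 4)/(x-1) ≤ Real.sqrt (1 - (2*L + 4)/x) := by
    rw [show 1 - (2*L + 4)/x = (x - 2*L - 4)/x by field_simp; ring]
    rw [Real.le_sqrt (by positivity) (by positivity)]
    rw [div_pow, div_le_div_iff₀ (by positivity) hx0]
    nlinarith [key]
  have hmul : (x - 1) * ((x - L - 4)/(x-1)) = x - L - 4 := by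
    field_simp
  have := mul_le_mul_of_nonneg_left hsq (le_of_lt hx1)
  rw [hmul] at this
  have hgoal : (x - 1) * Real.sqrt (1 - (2*L + 4)/x) ≥ x - L - 4 := this
  linarith [hgoal]
end

section
/- Let x₁, …, xₙ be positive real numbers with maximum b, arithmetic mean A = (Σxᵢ)/n and geometric mean G = (Πxᵢ)^(1/n). Then A − G ≥ (1/(2b))·((Σxᵢ²)/n − A²), i.e., the AM-GM gap is at least the variance divided by twice the maximum. -/
/-!
Induct on the number of terms, peeling off a largest one, `t`. If the remaining `m` terms have
arithmetic mean `A`, geometric mean `G` and variance `V`, then with `l = m / (m + 1)` the new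
means are `l A + (1 - l) t` and `G ^ l t ^ (1 - l)`, and the new variance is
`l V + l (1 - l) (A - t) ^ 2`. The new AM-GM gap splits as
`(l A + (1 - l) t - A ^ l t ^ (1 - l)) + t ^ (1 - l) (A ^ l - G ^ l)`: the first summand is the
two-point case of the inequality, and the second is at least `l (A - G)` by concavity of
`u ↦ u ^ l`, because `A ≤ t`.
-/

open Finset Real

lemma hasDerivAt_cartwright_field_two (l c M : ℝ) {y : ℝ} (hy : y ≠ 0) :
    HasDerivAt
      (fun z ↦ l * z + (1 - l) * c - z ^ l * c ^ (1 - l) - l * (1 - l) * (z - c) ^ 2 / (2 * M))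
      (l * (1 - y ^ (l - 1) * c ^ (1 - l) - (1 - l) * (y - c) / M)) y := by
  have h := ((((hasDerivAt_id y).const_mul l).add_const ((1 - l) * c)).sub
    ((hasDerivAt_rpow_const (p := l) (Or.inl hy)).mul_const (c ^ (1 - l)))).sub
    ((((hasDerivAt_id y).sub_const c).pow 2).const_mul (l * (1 - l)) |>.div_const (2 * M))
  exact h.congr_deriv (by simp; ring)

lemma cartwright_field_two_of_le {l a c M : ℝ} (hl0 : 0 ≤ l) (hl1 : l ≤ 1) (hc : 0 < c)
    (hca : c ≤ a) (haM : a ≤ M) :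
    l * (1 - l) * (a - c) ^ 2 / (2 * M) ≤ l * a + (1 - l) * c - a ^ l * c ^ (1 - l) := by
  have hF := fun y (hy : y ∈ Set.Icc c M) ↦
    hasDerivAt_cartwright_field_two l c M (hc.trans_le hy.1).ne'
  have hmono := monotoneOn_of_hasDerivWithinAt_nonneg (convex_Icc c M)
    (fun y hy ↦ (hF y hy).continuousAt.continuousWithinAt)
    (fun y hy ↦ (hF y (interior_subset hy)).hasDerivWithinAt) fun y hy ↦ by
      rw [interior_Icc] at hy
      have hy0 : 0 < y := hc.trans hy.1
      have hpow : y ^ (l - 1) * c ^ (1 - l) ≤ 1 - (1 - l) * (y - c) / M := calc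
        y ^ (l - 1) * c ^ (1 - l) = y ^ l * c ^ (1 - l) / y := by
          rw [rpow_sub_one hy0.ne', div_mul_eq_mul_div]
        _ ≤ (l * y + (1 - l) * c) / y := by
          gcongr
          exact geom_mean_le_arith_mean2_weighted hl0 (by linarith) hy0.le hc.le (by ring)
        _ = 1 - (1 - l) * (y - c) / y := by field_simp; ring
        _ ≤ 1 - (1 - l) * (y - c) / M := by
          have : 0 ≤ (1 - l) * (y - c) := mul_nonneg (by linarith) (by linarith [hy.1])
          gcongr
          exact hy.2.le
      exact mul_nonneg hl0 (by linarith)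
  have hc' : c ^ l * c ^ (1 - l) = c := by rw [← rpow_add hc, add_sub_cancel, rpow_one]
  have := hmono ⟨le_rfl, hca.trans haM⟩ ⟨hca, haM⟩ hca
  norm_num [hc'] at this
  linarith

lemma cartwright_field_two {l a c M : ℝ} (hl0 : 0 ≤ l) (hl1 : l ≤ 1) (ha : 0 < a) (hc : 0 < c)
    (haM : a ≤ M) (hcM : c ≤ M) :
    l * (1 - l) * (a - c) ^ 2 / (2 * M) ≤ l * a + (1 - l) * c - a ^ l * c ^ (1 - l) := by
  rcases le_total c a with hca | hac
  · exact cartwright_field_two_of_le hl0 hl1 hc hca haM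
  · have h := cartwright_field_two_of_le (l := 1 - l) (by linarith) (by linarith) ha hac hcM
    rw [sub_sub_cancel] at h
    convert h using 1 <;> ring

lemma mul_sub_le_rpow_mul_rpow_sub_rpow {l g a t : ℝ} (hl0 : 0 ≤ l) (hl1 : l ≤ 1) (hg : 0 < g)
    (hga : g ≤ a) (hat : a ≤ t) :
    l * (a - g) ≤ t ^ (1 - l) * (a ^ l - g ^ l) := by
  have ha : 0 < a := hg.trans_le hga
  have hgm : g ^ l * a ^ (1 - l) ≤ l * g + (1 - l) * a :=
    geom_mean_le_arith_mean2_weighted hl0 (by linarith) hg.le ha.le (by ring)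
  have hfac : a ^ (1 - l) * a ^ l = a := by rw [← rpow_add ha]; norm_num
  calc l * (a - g) ≤ a ^ (1 - l) * (a ^ l - g ^ l) := by linarith
    _ ≤ t ^ (1 - l) * (a ^ l - g ^ l) := by
      gcongr
      exact sub_nonneg.2 (rpow_le_rpow hg.le hga hl0)

lemma cartwright_field_step {l a g v t b : ℝ} (hl0 : 0 ≤ l) (hl1 : l ≤ 1) (hg : 0 < g)
    (hga : g ≤ a) (hat : a ≤ t) (htb : t ≤ b) (ih : v / (2 * b) ≤ a - g) :
    (l * v + l * (1 - l) * (a - t) ^ 2) / (2 * b) ≤ l * a + (1 - l) * t - g ^ l * t ^ (1 - l) := by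
  have htwo := cartwright_field_two hl0 hl1 (hg.trans_le hga) (hg.trans_le (hga.trans hat))
    (hat.trans htb) htb
  have htan := mul_sub_le_rpow_mul_rpow_sub_rpow hl0 hl1 hg hga hat
  have hih := mul_le_mul_of_nonneg_left ih hl0
  rw [add_div, mul_div_assoc]
  linarith

theorem Finset.cartwright_field {ι : Type*} (s : Finset ι) (hs : s.Nonempty) (x : ι → ℝ) {b : ℝ}
    (hx : ∀ i ∈ s, 0 < x i) (hb : ∀ i ∈ s, x i ≤ b) :
    ((∑ i ∈ s, x i ^ 2) / #s - ((∑ i ∈ s, x i) / #s) ^ 2) / (2 * b) ≤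
      (∑ i ∈ s, x i) / #s - (∏ i ∈ s, x i) ^ ((1 : ℝ) / #s) := by
  classical
  induction s using Finset.induction_on_max_value x with
  | empty => exact absurd hs not_nonempty_empty
  | insert a s ha hmax ih =>
    rcases s.eq_empty_or_nonempty with rfl | hs
    · simp
    have hx' : ∀ i ∈ s, 0 < x i := fun i hi ↦ hx i (mem_insert_of_mem hi)
    replace ih := ih hs hx' fun i hi ↦ hb i (mem_insert_of_mem hi)
    rw [card_insert_of_notMem ha, sum_insert ha, sum_insert ha, prod_insert ha, Nat.cast_succ]
    set m := (#s : ℝ)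
    set S := ∑ i ∈ s, x i
    set P := ∏ i ∈ s, x i
    set l := m / (m + 1)
    have hm : 0 < m := Nat.cast_pos.2 hs.card_pos
    have hP : 0 < P := prod_pos hx'
    have hgm : P ^ (1 / m) ≤ S / m := by
      simpa [one_div] using
        geom_mean_le_arith_mean s 1 x (by simp) (by simpa using hs) fun i hi ↦ (hx' i hi).le
    have hat : S / m ≤ x a := by
      rw [div_le_iff₀ hm]
      simpa [mul_comm] using sum_le_card_nsmul s x (x a) hmax
    have hmean : (x a + S) / (m + 1) = l * (S / m) + (1 - l) * x a := by
      simp only [l]; field_simp; ring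
    have hvar : (x a ^ 2 + ∑ i ∈ s, x i ^ 2) / (m + 1) - ((x a + S) / (m + 1)) ^ 2 =
        l * ((∑ i ∈ s, x i ^ 2) / m - (S / m) ^ 2) + l * (1 - l) * (S / m - x a) ^ 2 := by
      simp only [l]; field_simp; ring
    have hgeom : (x a * P) ^ (1 / (m + 1)) = (P ^ (1 / m)) ^ l * x a ^ (1 - l) := by
      rw [← rpow_mul hP.le, mul_rpow (hx a (mem_insert_self a s)).le hP.le, mul_comm]
      simp only [l]; field_simp; ring_nf
    rw [hvar, hmean, hgeom]
    exact cartwright_field_step (div_nonneg hm.le (by positivity))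
      (div_le_one_of_le₀ (by linarith) (by positivity)) (by positivity) hgm hat
      (hb a (mem_insert_self a s)) ih

theorem stmt_6_general (n : ℕ) (hn : 1 ≤ n) (x : Fin n → ℝ) (hx : ∀ i, 0 < x i)
    (b : ℝ) (hb : ∀ i, x i ≤ b) :
    (∑ i, x i) / n - (∏ i, x i) ^ ((1 : ℝ) / n) ≥
      (1 / (2 * b)) * ((∑ i, x i ^ 2) / n - ((∑ i, x i) / n) ^ 2) := by
  have : Nonempty (Fin n) := ⟨⟨0, hn⟩⟩
  have h := cartwright_field univ univ_nonempty x (fun i _ ↦ hx i) fun i _ ↦ hb i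
  rw [card_univ, Fintype.card_fin] at h
  rw [ge_iff_le, one_div_mul_eq_div]
  exact h

theorem stmt_6 (n : ℕ) (hn : 1 ≤ n) (x : Fin n → ℝ) (hx : ∀ i, 0 < x i)
    (b : ℝ) (hb : ∀ i, x i ≤ b) (hb' : ∃ i, x i = b) :
    (∑ i, x i) / n - (∏ i, x i) ^ ((1 : ℝ) / n) ≥
      (1 / (2 * b)) * ((∑ i, x i ^ 2) / n - ((∑ i, x i) / n) ^ 2) :=
  stmt_6_general n hn x hx b hb
end

section
/- Let G be a finite simple graph on n vertices with adjacency matrix A having eigenvalues λ₁ ≥ … ≥ λₙ and det A ≠ 0. If |λᵢ| ≤ 7.11 for all i, then the energy E(G) = Σ|λᵢ| satisfies E(G) ≥ (10n)/11 + (2m)/11, where m is the number of edges. -/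
/-!
Each eigenvalue `μ` satisfies `0 < |μ| ≤ 7.11`, and on that range
`10 + t² + 9 log t ≤ 11 t`. Summing over the spectrum, `∑ μᵢ² = tr A² = 2m` and
`∑ log |μᵢ| = log |det A| ≥ 0` because `det A` is a nonzero integer.
-/

open Finset Matrix

namespace Matrix.IsHermitian

variable {n 𝕜 : Type*} [Fintype n] [DecidableEq n] [RCLike 𝕜] {A : Matrix n n 𝕜}

theorem eigenvalues_ne_zero (hA : A.IsHermitian) (hdet : A.det ≠ 0) (i : n) :
    hA.eigenvalues i ≠ 0 := by
  intro h
  exact hdet (by rw [hA.det_eq_prod_eigenvalues]; exact prod_eq_zero (mem_univ i) (by simp [h]))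

theorem sum_log_abs_eigenvalues (hA : A.IsHermitian) (hdet : A.det ≠ 0) :
    ∑ i, Real.log |hA.eigenvalues i| = Real.log ‖A.det‖ := by
  rw [hA.det_eq_prod_eigenvalues, norm_prod,
    Real.log_prod fun i _ => by simp [hA.eigenvalues_ne_zero hdet i]]
  simp

theorem trace_mul_self (hA : A.IsHermitian) :
    (A * A).trace = ∑ i, (hA.eigenvalues i : 𝕜) ^ 2 := by
  set U : Matrix n n 𝕜 := (hA.eigenvectorUnitary : Matrix n n 𝕜)
  have hU : star U * U = 1 := Matrix.mem_unitaryGroup_iff'.mp hA.eigenvectorUnitary.2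
  conv_lhs => rw [hA.spectral_theorem, Unitary.conjStarAlgAut_apply]
  rw [show ∀ D : Matrix n n 𝕜, U * D * star U * (U * D * star U) = U * (D * D) * star U by
      intro D; simp only [Matrix.mul_assoc, ← Matrix.mul_assoc (star U) U, hU, Matrix.one_mul],
    Matrix.trace_mul_cycle, ← Matrix.mul_assoc, hU, Matrix.one_mul, diagonal_mul_diagonal,
    trace_diagonal]
  simp [sq]

end Matrix.IsHermitian

namespace SimpleGraph

variable {V : Type*} [Fintype V] (G : SimpleGraph V) [DecidableRel G.Adj]

theorem trace_adjMatrix_mul_self (α : Type*) [NonAssocSemiring α] :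
    (G.adjMatrix α * G.adjMatrix α).trace = 2 * #G.edgeFinset := by
  simp only [Matrix.trace, diag_apply, adjMatrix_mul_self_apply_self, ← Nat.cast_sum,
    sum_degrees_eq_twice_card_edges]
  push_cast; rfl

theorem det_adjMatrix_eq_intCast [DecidableEq V] (α : Type*) [CommRing α] :
    (G.adjMatrix α).det = (G.adjMatrix ℤ).det := by
  rw [show ((G.adjMatrix ℤ).det : α) = Int.castRingHom α (G.adjMatrix ℤ).det from rfl,
    RingHom.map_det]
  congr
  ext i j
  simp [adjMatrix_apply, apply_ite (Int.cast : ℤ → α)]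

theorem one_le_abs_det_adjMatrix [DecidableEq V] (hdet : (G.adjMatrix ℝ).det ≠ 0) :
    1 ≤ |(G.adjMatrix ℝ).det| := by
  rw [G.det_adjMatrix_eq_intCast ℝ] at hdet ⊢
  exact_mod_cast Int.one_le_abs (by exact_mod_cast hdet)

end SimpleGraph

namespace Real

-- `11s² - s⁴ - 10 - 18(s - 1) = -(s - 1)²(s - 2)(s + 4)`.
theorem ten_add_pow_four_add_mul_log_le_of_le_two {s : ℝ} (hs : 0 < s) (hs2 : s ≤ 2) :
    10 + s ^ 4 + 18 * log s ≤ 11 * s ^ 2 := by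
  have hlog : log s ≤ s - 1 := log_le_sub_one_of_pos hs
  nlinarith [mul_nonneg (mul_nonneg (sq_nonneg (s - 1)) (sub_nonneg.2 hs2)) hs.le]

-- `log s ≤ s / e` is sharp at `s = e ≈ √7.11`, where the inequality is nearly an equality.
theorem ten_add_pow_four_add_mul_log_le_of_two_le {s : ℝ} (hs2 : 2 ≤ s) (hs7 : s ^ 2 ≤ 7.11) :
    10 + s ^ 4 + 18 * log s ≤ 11 * s ^ 2 := by
  have hlog : exp 1 * log s ≤ s := by
    simpa [exp_log (by linarith : (0:ℝ) < s)] using exp_one_mul_le_exp (x := log s)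
  have hlog0 : 0 ≤ log s := log_nonneg (by linarith)
  have he : (2.7182818283 : ℝ) < exp 1 := exp_one_gt_d9
  have hpoly : 18 * s ≤ 2.7182818283 * (11 * s ^ 2 - 10 - s ^ 4) := by
    nlinarith [sq_nonneg (s - 2.6665), mul_nonneg (by nlinarith : (0:ℝ) ≤ s ^ 2 - 4)
      (by linarith : (0:ℝ) ≤ 7.11 - s ^ 2)]
  nlinarith

theorem ten_add_sq_add_mul_log_le {t : ℝ} (ht : 0 < t) (ht7 : t ≤ 7.11) :
    10 + t ^ 2 + 9 * log t ≤ 11 * t := by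
  obtain ⟨s, hs, rfl⟩ : ∃ s, 0 < s ∧ s ^ 2 = t := ⟨√t, sqrt_pos.2 ht, sq_sqrt ht.le⟩
  have key := (le_or_gt s 2).elim (ten_add_pow_four_add_mul_log_le_of_le_two hs)
    fun h => ten_add_pow_four_add_mul_log_le_of_two_le h.le ht7
  rw [log_pow]
  push_cast
  linarith

end Real

open Real in
theorem stmt_8 {V : Type*} [Fintype V] [DecidableEq V]
    (G : SimpleGraph V) [DecidableRel G.Adj]
    (hA : (G.adjMatrix ℝ).IsHermitian)
    (hdet : (G.adjMatrix ℝ).det ≠ 0)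
    (hbd : ∀ i, |hA.eigenvalues i| ≤ 7.11) :
    ∑ i, |hA.eigenvalues i| ≥
      10 * (Fintype.card V : ℝ) / 11 + 2 * (G.edgeFinset.card : ℝ) / 11 := by
  set μ := hA.eigenvalues
  have hsq : ∑ i, μ i ^ 2 = 2 * (G.edgeFinset.card : ℝ) := by
    simpa using hA.trace_mul_self.symm.trans (G.trace_adjMatrix_mul_self ℝ)
  have hlog : 0 ≤ ∑ i, log |μ i| := by
    rw [hA.sum_log_abs_eigenvalues hdet, Real.norm_eq_abs]
    exact log_nonneg (G.one_le_abs_det_adjMatrix hdet)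
  have hterm (i : V) : 10 + μ i ^ 2 + 9 * log |μ i| ≤ 11 * |μ i| := by
    simpa only [sq_abs] using
      ten_add_sq_add_mul_log_le (abs_pos.2 (hA.eigenvalues_ne_zero hdet i)) (hbd i)
  have hsum := sum_le_sum fun i (_ : i ∈ univ) => hterm i
  simp only [sum_add_distrib, sum_const, card_univ, nsmul_eq_mul, ← mul_sum, hsq] at hsum
  linarith
end

section
/- Let G be a nonsingular simple graph on n vertices with eigenvalues λ₁ ≥ … ≥ λₙ of the adjacency matrix. Then the energy satisfies E(G) ≥ n − 1 + λ₁ + ln|det A(G)| − ln λ₁, where A(G) is the adjacency matrix (assuming λ₁ > 0). -/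
open Finset Matrix

theorem stmt_10 {V : Type*} [Fintype V] [DecidableEq V]
    (G : SimpleGraph V) [DecidableRel G.Adj]
    (hA : (G.adjMatrix ℝ).IsHermitian)
    (hdet : (G.adjMatrix ℝ).det ≠ 0)
    (lam1 : ℝ) (hpos : 0 < lam1)
    (hmax : ∀ i, hA.eigenvalues i ≤ lam1) (hmem : ∃ i, hA.eigenvalues i = lam1) :
    ∑ i, |hA.eigenvalues i| ≥
      (Fintype.card V : ℝ) - 1 + lam1 + Real.log |(G.adjMatrix ℝ).det| - Real.log lam1 := by
  obtain ⟨i₀, hi₀⟩ := hmem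
  have hprod : (G.adjMatrix ℝ).det = ∏ i, hA.eigenvalues i := by
    simpa using hA.det_eq_prod_eigenvalues
  have hne : ∀ i, hA.eigenvalues i ≠ 0 := by
    intro i hi
    apply hdet
    rw [hprod]
    exact Finset.prod_eq_zero (mem_univ i) hi
  have hlogdet : Real.log |(G.adjMatrix ℝ).det| = ∑ i, Real.log |hA.eigenvalues i| := by
    rw [hprod, Finset.abs_prod, Real.log_prod]
    intro i _
    exact abs_ne_zero.2 (hne i)
  have hkey : ∀ i, Real.log |hA.eigenvalues i| + 1 ≤ |hA.eigenvalues i| := by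
    intro i
    have := Real.log_le_sub_one_of_pos (abs_pos.2 (hne i))
    linarith
  have hsplit : ∑ i, |hA.eigenvalues i|
      = lam1 + ∑ i ∈ univ.erase i₀, |hA.eigenvalues i| := by
    rw [← Finset.add_sum_erase _ _ (mem_univ i₀), hi₀, abs_of_pos hpos]
  have hsplit2 : ∑ i, Real.log |hA.eigenvalues i|
      = Real.log lam1 + ∑ i ∈ univ.erase i₀, Real.log |hA.eigenvalues i| := by
    rw [← Finset.add_sum_erase _ _ (mem_univ i₀), hi₀, abs_of_pos hpos]
  have hcard : ((univ.erase i₀).card : ℝ) = (Fintype.card V : ℝ) - 1 := by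
    rw [Finset.card_erase_of_mem (mem_univ i₀)]
    have : 1 ≤ Fintype.card V := Fintype.card_pos_iff.2 ⟨i₀⟩
    rw [Finset.card_univ, Nat.cast_sub this, Nat.cast_one]
  have hbound : ∑ i ∈ univ.erase i₀, (Real.log |hA.eigenvalues i| + 1)
      ≤ ∑ i ∈ univ.erase i₀, |hA.eigenvalues i| :=
    Finset.sum_le_sum fun i _ => hkey i
  rw [Finset.sum_add_distrib, Finset.sum_const, nsmul_eq_mul, mul_one] at hbound
  rw [ge_iff_le, hlogdet, hsplit, hsplit2]
  have := hcard
  linarith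
end

section
/- Let G be a nonsingular simple graph on n ≥ 2 vertices with adjacency eigenvalues λ₁ ≥ … ≥ λₙ (λ₁ > 0). Then E(G) ≥ λ₁ + (n−1)·(|det A(G)|/λ₁)^(1/(n−1)). -/
/-!
Since `|det A| = ∏ |λᵢ|`, the `n - 1` numbers `|λᵢ|` with `λᵢ` other than the chosen eigenvalue
`λ₁ > 0` have product `|det A| / λ₁`, and AM-GM bounds their sum below by
`(n - 1) (|det A| / λ₁) ^ (1 / (n - 1))`.
-/

open Finset Matrix

theorem Real.card_mul_prod_rpow_one_div_card_le_sum {ι : Type*} (s : Finset ι) (z : ι → ℝ)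
    (hz : ∀ i ∈ s, 0 ≤ z i) :
    (#s : ℝ) * (∏ i ∈ s, z i) ^ ((1 : ℝ) / #s) ≤ ∑ i ∈ s, z i := by
  rcases s.eq_empty_or_nonempty with rfl | hs
  · simp
  have hcard : (0 : ℝ) < #s := by exact_mod_cast hs.card_pos
  have amgm := Real.geom_mean_le_arith_mean s (fun _ ↦ 1) z (fun _ _ ↦ zero_le_one)
    (by simpa using hcard) hz
  simp only [Real.rpow_one, one_mul, sum_const, nsmul_eq_mul, mul_one] at amgm
  rw [one_div, mul_comm]
  exact (le_div_iff₀ hcard).mp amgm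

theorem Matrix.IsHermitian.abs_det_eq_prod_abs_eigenvalues {n : Type*} [Fintype n]
    [DecidableEq n] {A : Matrix n n ℝ} (hA : A.IsHermitian) :
    |A.det| = ∏ i, |hA.eigenvalues i| := by
  simp [hA.det_eq_prod_eigenvalues, abs_prod]

theorem Matrix.IsHermitian.add_mul_rpow_le_sum_abs_eigenvalues {n : Type*} [Fintype n]
    [DecidableEq n] {A : Matrix n n ℝ} (hA : A.IsHermitian) {i₀ : n}
    (hpos : 0 < hA.eigenvalues i₀) :
    hA.eigenvalues i₀ + ((Fintype.card n : ℝ) - 1) *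
        (|A.det| / hA.eigenvalues i₀) ^ ((1 : ℝ) / ((Fintype.card n : ℝ) - 1)) ≤
      ∑ i, |hA.eigenvalues i| := by
  set others := univ.erase i₀
  have hcard : (#others : ℝ) = (Fintype.card n : ℝ) - 1 := by
    rw [card_erase_of_mem (mem_univ _), card_univ,
      Nat.cast_sub (Fintype.card_pos_iff.mpr ⟨i₀⟩), Nat.cast_one]
  have hdet : |A.det| / hA.eigenvalues i₀ = ∏ i ∈ others, |hA.eigenvalues i| := by
    rw [hA.abs_det_eq_prod_abs_eigenvalues, ← mul_prod_erase _ _ (mem_univ i₀),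
      abs_of_pos hpos, mul_div_cancel_left₀ _ hpos.ne']
  rw [← add_sum_erase _ _ (mem_univ i₀), abs_of_pos hpos, hdet, ← hcard]
  exact add_le_add_right
    (Real.card_mul_prod_rpow_one_div_card_le_sum _ _ fun _ _ ↦ abs_nonneg _) _

theorem stmt_11_general {V : Type*} [Fintype V] [DecidableEq V]
    (G : SimpleGraph V) [DecidableRel G.Adj]
    (hA : (G.adjMatrix ℝ).IsHermitian)
    (lam1 : ℝ) (hpos : 0 < lam1)
    (hmem : ∃ i, hA.eigenvalues i = lam1) :
    ∑ i, |hA.eigenvalues i| ≥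
      lam1 + ((Fintype.card V : ℝ) - 1) *
        (|(G.adjMatrix ℝ).det| / lam1) ^ ((1 : ℝ) / ((Fintype.card V : ℝ) - 1)) := by
  obtain ⟨i₀, rfl⟩ := hmem
  exact hA.add_mul_rpow_le_sum_abs_eigenvalues hpos

theorem stmt_11 {V : Type*} [Fintype V] [DecidableEq V]
    (G : SimpleGraph V) [DecidableRel G.Adj]
    (hn : 2 ≤ Fintype.card V)
    (hA : (G.adjMatrix ℝ).IsHermitian)
    (hdet : (G.adjMatrix ℝ).det ≠ 0)
    (lam1 : ℝ) (hpos : 0 < lam1)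
    (hmax : ∀ i, hA.eigenvalues i ≤ lam1) (hmem : ∃ i, hA.eigenvalues i = lam1) :
    ∑ i, |hA.eigenvalues i| ≥
      lam1 + ((Fintype.card V : ℝ) - 1) *
        (|(G.adjMatrix ℝ).det| / lam1) ^ ((1 : ℝ) / ((Fintype.card V : ℝ) - 1)) :=
  stmt_11_general G hA lam1 hpos hmem
end

section
/- Let G be a nonsingular simple graph on n vertices with m edges, adjacency matrix A, eigenvalues ordered by absolute value so that μ₁ ≥ μ₂ are the two largest absolute values of eigenvalues, with μ₁ = λ₁ > 0 and μ₂ > 0. Then E(G) ≥ μ₁ + (n−1)·(√(μ₂² + 2μ₂·(|det A|/μ₁)^(1/(n−1)) + (2m−μ₁²)/(n−1)) − μ₂). -/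
/-!
Write `x₂, …, xₙ` for the absolute values of the eigenvalues other than `μ₁`: they lie in
`(0, μ₂]`, their product is `|det A| / μ₁` and their squares sum to `2m - μ₁²`. The bound is then
the refined AM-GM inequality `Var(x) ≤ 2 μ₂ (A(x) - G(x))`, solved for the arithmetic mean `A(x)`.
That inequality is obtained by averaging the pointwise bound
`2 b g log (x / g) ≤ 2 b (x - g) - (x - g)²` (valid for `0 < x, g ≤ b`) at `g = G(x)`, where the
logarithms average to zero.
-/

open Finset Matrix

theorem Real.two_mul_mul_log_sub_log_le {b g x : ℝ} (hg : 0 < g) (hgb : g ≤ b) (hx : 0 < x)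
    (hxb : x ≤ b) : 2 * b * g * (Real.log x - Real.log g) ≤ 2 * b * (x - g) - (x - g) ^ 2 := by
  set f : ℝ → ℝ := fun y =>
    2 * b * (y - g) - (y - g) ^ 2 - 2 * b * g * (Real.log y - Real.log g)
  -- `f` decreases on `(0, g]` and increases on `[g, b]`, so it is minimal at `g`, where it is `0`.
  set f' : ℝ → ℝ := fun y => 2 * (b - y) * (y - g) / y
  have hf' : ∀ y, 0 < y → HasDerivAt f (f' y) y := by
    intro y hy
    have hsub := (hasDerivAt_id' y).sub_const g
    refine (((hsub.const_mul (2 * b)).sub (hsub.pow 2)).sub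
      (((Real.hasDerivAt_log hy.ne').sub_const (Real.log g)).const_mul (2 * b * g))).congr_deriv ?_
    simp only [f']
    field_simp
    ring
  have hcont : ∀ a c, 0 < a → ContinuousOn f (Set.Icc a c) := fun a c ha y hy =>
    (hf' y (ha.trans_le hy.1)).continuousAt.continuousWithinAt
  suffices f g ≤ f x by simpa [f] using this
  rcases le_total x g with hxg | hgx
  · refine antitoneOn_of_hasDerivWithinAt_nonpos (convex_Icc x g) (f' := f') (hcont x g hx)
      (fun y hy => ?_) (fun y hy => ?_) ⟨le_rfl, hxg⟩ ⟨hxg, le_rfl⟩ hxg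
    · rw [interior_Icc] at hy
      exact (hf' y (hx.trans hy.1)).hasDerivWithinAt
    · rw [interior_Icc] at hy
      exact div_nonpos_of_nonpos_of_nonneg (by nlinarith [hy.2, hgb]) (hx.trans hy.1).le
  · refine monotoneOn_of_hasDerivWithinAt_nonneg (convex_Icc g x) (f' := f') (hcont g x hg)
      (fun y hy => ?_) (fun y hy => ?_) ⟨le_rfl, hgx⟩ ⟨hgx, le_rfl⟩ hgx
    · rw [interior_Icc] at hy
      exact (hf' y (hg.trans hy.1)).hasDerivWithinAt
    · rw [interior_Icc] at hy
      exact div_nonneg (by nlinarith [hy.1, hy.2, hxb]) (hg.trans hy.1).le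

theorem Real.variance_le_two_mul_sub_geom_mean_weighted {ι : Type*} (s : Finset ι)
    (w z : ι → ℝ) {b : ℝ} (hw : ∀ i ∈ s, 0 ≤ w i) (hw' : ∑ i ∈ s, w i = 1) (hz : ∀ i ∈ s, 0 < z i)
    (hzb : ∀ i ∈ s, z i ≤ b) :
    ∑ i ∈ s, w i * z i ^ 2 - (∑ i ∈ s, w i * z i) ^ 2 ≤
      2 * b * (∑ i ∈ s, w i * z i - ∏ i ∈ s, z i ^ w i) := by
  set a := ∑ i ∈ s, w i * z i
  set g := ∏ i ∈ s, z i ^ w i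
  have hg : 0 < g := prod_pos fun i hi => Real.rpow_pos_of_pos (hz i hi) _
  have hga : g ≤ a :=
    Real.geom_mean_le_arith_mean_weighted s w z hw hw' fun i hi => (hz i hi).le
  have hab : a ≤ b := calc
    a ≤ ∑ i ∈ s, w i * b := sum_le_sum fun i hi => mul_le_mul_of_nonneg_left (hzb i hi) (hw i hi)
    _ = b := by rw [← sum_mul, hw', one_mul]
  have hlog : ∑ i ∈ s, w i * (Real.log (z i) - Real.log g) = 0 := by
    have : Real.log g = ∑ i ∈ s, w i * Real.log (z i) := by
      rw [Real.log_prod fun i hi => (Real.rpow_pos_of_pos (hz i hi) _).ne']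
      exact sum_congr rfl fun i hi => Real.log_rpow (hz i hi) _
    simp only [mul_sub, sum_sub_distrib, ← sum_mul, hw', one_mul, this, sub_self]
  have hsum : 0 ≤ 2 * b * (a - g) - (∑ i ∈ s, w i * z i ^ 2 - 2 * g * a + g ^ 2) := calc
    0 = 2 * b * g * ∑ i ∈ s, w i * (Real.log (z i) - Real.log g) := by rw [hlog, mul_zero]
    _ = ∑ i ∈ s, w i * (2 * b * g * (Real.log (z i) - Real.log g)) := by
        rw [mul_sum]; exact sum_congr rfl fun i _ => by ring
    _ ≤ ∑ i ∈ s, w i * (2 * b * (z i - g) - (z i - g) ^ 2) :=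
        sum_le_sum fun i hi => mul_le_mul_of_nonneg_left
          (Real.two_mul_mul_log_sub_log_le hg (hga.trans hab) (hz i hi) (hzb i hi)) (hw i hi)
    _ = ∑ i ∈ s, (2 * (b + g) * (w i * z i) - (2 * b * g + g ^ 2) * w i - w i * z i ^ 2) :=
        sum_congr rfl fun i _ => by ring
    _ = _ := by rw [sum_sub_distrib, sum_sub_distrib, ← mul_sum, ← mul_sum, hw']; ring
  nlinarith [sq_nonneg (a - g)]

theorem card_mul_sqrt_sub_le_sum {ι : Type*} (s : Finset ι) (z : ι → ℝ) {b : ℝ}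
    (hz : ∀ i ∈ s, 0 < z i) (hzb : ∀ i ∈ s, z i ≤ b) :
    (#s : ℝ) *
        (√(b ^ 2 + 2 * b * (∏ i ∈ s, z i) ^ ((1 : ℝ) / #s) + (∑ i ∈ s, z i ^ 2) / #s) - b) ≤
      ∑ i ∈ s, z i := by
  rcases s.eq_empty_or_nonempty with rfl | ⟨j, hj⟩
  · simp
  have hN : (0 : ℝ) < #s := by exact_mod_cast card_pos.2 ⟨j, hj⟩
  have hb : 0 < b := (hz j hj).trans_le (hzb j hj)
  have h := Real.variance_le_two_mul_sub_geom_mean_weighted s (fun _ => 1 / (#s : ℝ)) z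
    (fun _ _ => by positivity) (by simp [hN.ne']) hz hzb
  rw [Real.finsetProd_rpow s z fun i hi => (hz i hi).le, ← mul_sum, ← mul_sum] at h
  set g := (∏ i ∈ s, z i) ^ ((1 : ℝ) / #s)
  set S := ∑ i ∈ s, z i
  set Q := ∑ i ∈ s, z i ^ 2
  have hS : 0 ≤ S := sum_nonneg fun i hi => (hz i hi).le
  have hsqrt : √(b ^ 2 + 2 * b * g + Q / #s) ≤ S / #s + b := by
    rw [Real.sqrt_le_left (by positivity)]
    rw [one_div_mul_eq_div, one_div_mul_eq_div] at h
    nlinarith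
  calc (#s : ℝ) * (√(b ^ 2 + 2 * b * g + Q / #s) - b) ≤ #s * (S / #s) := by gcongr; linarith
    _ = S := mul_div_cancel₀ S hN.ne'

theorem Matrix.IsHermitian.trace_mul_self_s14 {𝕜 n : Type*} [RCLike 𝕜] [Fintype n] [DecidableEq n]
    {A : Matrix n n 𝕜} (hA : A.IsHermitian) :
    (A * A).trace = ∑ i, (hA.eigenvalues i : 𝕜) ^ 2 := by
  conv_lhs => rw [hA.spectral_theorem, ← map_mul, Unitary.conjStarAlgAut_apply, trace_mul_cycle,
    Unitary.coe_star_mul_self, one_mul, diagonal_mul_diagonal, trace_diagonal]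
  simp [sq]

theorem SimpleGraph.sum_eigenvalues_adjMatrix_sq {V : Type*} [Fintype V] [DecidableEq V]
    (G : SimpleGraph V) [DecidableRel G.Adj] (hA : (G.adjMatrix ℝ).IsHermitian) :
    ∑ i, hA.eigenvalues i ^ 2 = 2 * #G.edgeFinset := by
  have htrace : (G.adjMatrix ℝ * G.adjMatrix ℝ).trace = ∑ v, (G.degree v : ℝ) :=
    sum_congr rfl fun v _ => G.adjMatrix_mul_self_apply_self v
  simpa [htrace, ← Nat.cast_sum, G.sum_degrees_eq_twice_card_edges] using hA.trace_mul_self_s14.symm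

theorem stmt_14_general {V : Type*} [Fintype V] [DecidableEq V]
    (G : SimpleGraph V) [DecidableRel G.Adj]
    (hA : (G.adjMatrix ℝ).IsHermitian)
    (hdet : (G.adjMatrix ℝ).det ≠ 0)
    (mu1 mu2 : ℝ) (hmu1pos : 0 < mu1)
    (i0 : V) (hi0 : hA.eigenvalues i0 = mu1)
    (hmax2 : ∀ i, i ≠ i0 → |hA.eigenvalues i| ≤ mu2) :
    ∑ i, |hA.eigenvalues i| ≥
      mu1 + ((Fintype.card V : ℝ) - 1) *
        (Real.sqrt (mu2 ^ 2 +
            2 * mu2 * (|(G.adjMatrix ℝ).det| / mu1) ^ ((1 : ℝ) / ((Fintype.card V : ℝ) - 1)) +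
            (2 * (G.edgeFinset.card : ℝ) - mu1 ^ 2) / ((Fintype.card V : ℝ) - 1)) - mu2) := by
  have hdet_prod : (G.adjMatrix ℝ).det = ∏ i, hA.eigenvalues i := by
    simpa using hA.det_eq_prod_eigenvalues
  have he : ∀ i, hA.eigenvalues i ≠ 0 := fun i h =>
    hdet (hdet_prod ▸ prod_eq_zero (mem_univ i) h)
  have he_i0 : |hA.eigenvalues i0| = mu1 := by rw [hi0, abs_of_pos hmu1pos]
  have hcard : (Fintype.card V : ℝ) - 1 = #(univ.erase i0) := by
    rw [card_erase_of_mem (mem_univ i0), card_univ, Nat.cast_pred (Fintype.card_pos_iff.2 ⟨i0⟩)]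
  have hprod : |(G.adjMatrix ℝ).det| / mu1 = ∏ i ∈ univ.erase i0, |hA.eigenvalues i| := by
    rw [hdet_prod, abs_prod, ← mul_prod_erase univ _ (mem_univ i0), he_i0,
      mul_div_cancel_left₀ _ hmu1pos.ne']
  have hsq :
      2 * (#G.edgeFinset : ℝ) - mu1 ^ 2 = ∑ i ∈ univ.erase i0, |hA.eigenvalues i| ^ 2 := by
    rw [← G.sum_eigenvalues_adjMatrix_sq hA, ← add_sum_erase univ _ (mem_univ i0), hi0]
    simp only [sq_abs, add_sub_cancel_left]
  rw [← add_sum_erase univ _ (mem_univ i0), he_i0, hcard, hprod, hsq, ge_iff_le,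
    add_le_add_iff_left]
  exact card_mul_sqrt_sub_le_sum _ _ (fun i _ => abs_pos.2 (he i))
    fun i hi => hmax2 i (ne_of_mem_erase hi)

theorem stmt_14 {V : Type*} [Fintype V] [DecidableEq V]
    (G : SimpleGraph V) [DecidableRel G.Adj]
    (hA : (G.adjMatrix ℝ).IsHermitian)
    (hdet : (G.adjMatrix ℝ).det ≠ 0)
    (mu1 mu2 : ℝ) (hmu1pos : 0 < mu1) (hmu2pos : 0 < mu2)
    (i0 : V) (hi0 : hA.eigenvalues i0 = mu1)
    (hmax1 : ∀ i, |hA.eigenvalues i| ≤ mu1)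
    (hmax2 : ∀ i, i ≠ i0 → |hA.eigenvalues i| ≤ mu2)
    (hmem2 : ∃ i, i ≠ i0 ∧ |hA.eigenvalues i| = mu2) :
    ∑ i, |hA.eigenvalues i| ≥
      mu1 + ((Fintype.card V : ℝ) - 1) *
        (Real.sqrt (mu2 ^ 2 +
            2 * mu2 * (|(G.adjMatrix ℝ).det| / mu1) ^ ((1 : ℝ) / ((Fintype.card V : ℝ) - 1)) +
            (2 * (G.edgeFinset.card : ℝ) - mu1 ^ 2) / ((Fintype.card V : ℝ) - 1)) - mu2) :=
  stmt_14_general G hA hdet mu1 mu2 hmu1pos i0 hi0 hmax2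
end

section
/- Let n₁, n₂ ≥ 1 and m₁, m₂ ≥ 0 be real numbers with 2m₁ ≥ n₁ and 2m₁/n₁ ≤ 2m₂/n₂. If E₁ ≥ 2m₁/n₁ + n₁ − 1 and E₂ ≥ 2m₂/n₂ + n₂ − 1, then E₁ + E₂ ≥ 2(m₁+m₂)/(n₁+n₂) + (n₁+n₂) − 1. -/
theorem stmt_19 (n₁ n₂ m₁ m₂ E₁ E₂ : ℝ) (hn₁ : 1 ≤ n₁) (hn₂ : 1 ≤ n₂)
    (hm₁ : 0 ≤ m₁) (hm₂ : 0 ≤ m₂) (h₁ : n₁ ≤ 2 * m₁)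
    (hord : 2 * m₁ / n₁ ≤ 2 * m₂ / n₂)
    (hE₁ : E₁ ≥ 2 * m₁ / n₁ + n₁ - 1) (hE₂ : E₂ ≥ 2 * m₂ / n₂ + n₂ - 1) :
    E₁ + E₂ ≥ 2 * (m₁ + m₂) / (n₁ + n₂) + (n₁ + n₂) - 1 := by
  have p₁ : (0:ℝ) < n₁ := by linarith
  have p₂ : (0:ℝ) < n₂ := by linarith
  have p₁₂ : (0:ℝ) < n₁ + n₂ := by linarith
  have hd₁ : 1 ≤ 2 * m₁ / n₁ := (one_le_div p₁).mpr h₁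
  have hcross : 2 * m₁ * n₂ ≤ 2 * m₂ * n₁ := (div_le_div_iff₀ p₁ p₂).mp hord
  have key : 2 * (m₁ + m₂) / (n₁ + n₂) ≤ 2 * m₂ / n₂ := by
    rw [div_le_div_iff₀ p₁₂ p₂]; nlinarith
  linarith
end
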